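/- Let φ be a diffuse submeasure on a Boolean algebra 𝒜 that is a nonzero measure (finitely additive). Then lim_{ξ→0⁺} h_φ(ξ) = 1/φ(1). -/

import Mathlib

/-- The "atom" of the subalgebra generated by the finite sequence `C`,
corresponding to a choice `s` of sides. -/
def atomOf {α : Type*} [BooleanAlgebra α] {m : ℕ} (C : Fin m → α) (s : Fin m → Bool) : α :=
  Finset.univ.inf (fun i => if s i then C i else (C i)ᶜ)

/-- The covering multiplicity of a finite sequence in a Boolean algebra: the largest `k`
such that every nonzero atom of the generated subalgebra lies below at least `k` of the `C i`. -/
noncomputable def covMult {α : Type*} [BooleanAlgebra α] {m : ℕ} (C : Fin m → α) : ℕ :=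
  sSup {k : ℕ | ∀ s : Fin m → Bool, atomOf C s ≠ ⊥ →
    k ≤ (Finset.univ.filter (fun i => s i = true)).card}

/-- Kelley's covering number of a family `ℬ` in a Boolean algebra. -/
noncomputable def covNumber {α : Type*} [BooleanAlgebra α] (ℬ : Set α) : ℝ :=
  sSup { r : ℝ | ∃ n : ℕ, 0 < n ∧ ∃ C : Fin n → α,
    (∀ i, C i ∈ ℬ) ∧ r = (covMult C : ℝ) / n }

/-- The function `h_φ` associated with a submeasure `φ`. -/
noncomputable def hphi {α : Type*} [BooleanAlgebra α] (φ : α → ℝ) (ξ : ℝ) : ℝ :=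
  covNumber {A : α | φ A ≤ ξ} / ξ

/-- A submeasure on a Boolean algebra. -/
def IsSubmeasure {α : Type*} [BooleanAlgebra α] (φ : α → ℝ) : Prop :=
  φ ⊥ = 0 ∧ Monotone φ ∧ ∀ a b : α, φ (a ⊔ b) ≤ φ a + φ b

/-- A diffuse submeasure: the unit can be covered by finitely many elements of
arbitrarily small submeasure. -/
def IsDiffuse {α : Type*} [BooleanAlgebra α] (φ : α → ℝ) : Prop :=
  ∀ ε : ℝ, 0 < ε → ∃ ℬ : Finset α, ℬ.sup id = ⊤ ∧ ∀ B ∈ ℬ, φ B ≤ ε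

/-- A (nonnegative, finitely additive) measure on a Boolean algebra. -/
def IsAddMeasure {α : Type*} [BooleanAlgebra α] (μ : α → ℝ) : Prop :=
  μ ⊥ = 0 ∧ (∀ a, 0 ≤ μ a) ∧ ∀ a b : α, Disjoint a b → μ (a ⊔ b) = μ a + μ b

/-! The upper bound `h_φ(ξ) ≤ 1 / φ(1)` holds for every `ξ > 0`: every nonzero atom of the
subalgebra generated by `C : Fin n → α` lies below at least `covMult C` of the `C i`, so splitting
each `C i` into atoms gives `covMult C * φ(1) ≤ ∑ i, φ(C i) ≤ n ξ`.

For the lower bound, diffuseness covers `1` by pieces of measure at most `ε = ξ²`. Packing them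
greedily into bins of measure at most `ξ` (a bin is closed as soon as the next piece does not fit)
covers `1` by `k + 1` bins of which the `k` closed ones have measure `> ξ - ε`. Hence
`k (ξ - ξ²) ≤ φ(1)`, and this cover alone gives
`h_φ(ξ) ≥ 1 / ((k + 1) ξ) ≥ (1 - ξ) / (φ(1) + ξ - ξ²)`. -/

open Finset Function Filter Topology

namespace IsAddMeasure

variable {α : Type*} [BooleanAlgebra α] {φ : α → ℝ}

theorem monotone (h : IsAddMeasure φ) : Monotone φ := by
  intro a b hab
  have := h.2.2 a (b \ a) disjoint_sdiff_self_right
  rw [sup_sdiff_cancel_right hab] at this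
  linarith [h.2.1 (b \ a)]

theorem map_finset_sup (h : IsAddMeasure φ) {ι : Type*} (s : Finset ι) {f : ι → α}
    (hf : (s : Set ι).PairwiseDisjoint f) : φ (s.sup f) = ∑ i ∈ s, φ (f i) := by
  induction s using Finset.cons_induction with
  | empty => simpa using h.1
  | cons a s ha ih =>
    have hdisj : Disjoint (f a) (s.sup f) := Finset.disjoint_sup_right.2 fun i hi =>
      hf (by simp) (by simp [hi]) (ne_of_mem_of_not_mem hi ha).symm
    rw [sup_cons, sum_cons, h.2.2 _ _ hdisj, ih (hf.subset (by simp))]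

end IsAddMeasure

section Atoms

variable {α : Type*} [BooleanAlgebra α] {m : ℕ} (C : Fin m → α)

theorem atomOf_le {s : Fin m → Bool} {i : Fin m} (hi : s i = true) : atomOf C s ≤ C i := by
  simpa [atomOf, hi] using inf_le (f := fun i => if s i then C i else (C i)ᶜ) (mem_univ i)

theorem atomOf_le_compl {s : Fin m → Bool} {i : Fin m} (hi : s i = false) :
    atomOf C s ≤ (C i)ᶜ := by
  simpa [atomOf, hi] using inf_le (f := fun i => if s i then C i else (C i)ᶜ) (mem_univ i)

theorem inf_atomOf (s : Fin m → Bool) (i : Fin m) :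
    C i ⊓ atomOf C s = if s i then atomOf C s else ⊥ := by
  cases hi : s i
  · exact (disjoint_compl_right.mono_right (atomOf_le_compl C hi)).eq_bot
  · exact inf_eq_right.2 (atomOf_le C hi)

theorem pairwise_disjoint_atomOf : Pairwise (Disjoint on (atomOf C)) := by
  intro s t hst
  obtain ⟨i, hi⟩ := Function.ne_iff.1 hst
  cases hs : s i <;> cases ht : t i <;> simp only [hs, ht, ne_eq, not_true_eq_false] at hi
  · exact disjoint_compl_left.mono (atomOf_le_compl C hs) (atomOf_le C ht)
  · exact disjoint_compl_right.mono (atomOf_le C hs) (atomOf_le_compl C ht)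

theorem sup_atomOf : univ.sup (atomOf C) = ⊤ := by
  classical
  have := Finset.inf_sup (univ : Finset (Fin m)) (fun _ => (univ : Finset Bool))
    (fun i b => if b then C i else (C i)ᶜ)
  simp only [Fintype.univ_bool, sup_insert, Bool.false_eq_true, ite_false, sup_singleton,
    ite_true, sup_compl_eq_top, inf_top] at this
  refine top_le_iff.1 (this.le.trans (Finset.sup_le fun g _ => ?_))
  refine le_sup_of_le (mem_univ fun i => g i (mem_univ i)) (le_of_eq ?_)
  exact Finset.inf_attach univ (fun i => if g i (mem_univ i) then C i else (C i)ᶜ)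

end Atoms

section CovMult

variable {α : Type*} [BooleanAlgebra α] {m : ℕ} (C : Fin m → α)

theorem IsAddMeasure.eq_sum_inf_atomOf {φ : α → ℝ} (h : IsAddMeasure φ) (a : α) :
    φ a = ∑ s, φ (a ⊓ atomOf C s) := by
  conv_lhs => rw [← inf_top_eq a, ← sup_atomOf C, sup_inf_distrib_left]
  exact h.map_finset_sup _ fun s _ t _ hst =>
    ((pairwise_disjoint_atomOf C hst).mono inf_le_right inf_le_right)

theorem covMult_le_card {s : Fin m → Bool} (hs : atomOf C s ≠ ⊥) :
    covMult C ≤ #{i | s i = true} := by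
  by_cases hbdd : BddAbove {k : ℕ | ∀ s : Fin m → Bool, atomOf C s ≠ ⊥ →
      k ≤ #{i | s i = true}}
  · exact Nat.sSup_mem (by exact ⟨0, fun _ _ => Nat.zero_le _⟩) hbdd s hs
  · simp [covMult, Nat.sSup_of_not_bddAbove hbdd]

theorem covMult_le : covMult C ≤ m := by
  by_cases h : ∃ s, atomOf C s ≠ ⊥
  · obtain ⟨s, hs⟩ := h
    exact (covMult_le_card C hs).trans (card_filter_le _ _ |>.trans_eq (card_fin m))
  · push Not at h
    have : ¬BddAbove {k : ℕ | ∀ s : Fin m → Bool, atomOf C s ≠ ⊥ → k ≤ #{i | s i = true}} := by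
      simp [h, not_bddAbove_univ]
    simp [covMult, Nat.sSup_of_not_bddAbove this]

theorem one_le_covMult (htop : (⊤ : α) ≠ ⊥) (hC : univ.sup C = ⊤) : 1 ≤ covMult C := by
  have hne : ∃ s, atomOf C s ≠ ⊥ := by
    by_contra! h
    rw [← sup_atomOf C] at htop
    exact htop ((Finset.sup_eq_bot_iff _ _).2 fun s _ => h s)
  obtain ⟨s₀, hs₀⟩ := hne
  refine le_csSup ⟨_, fun k hk => hk s₀ hs₀⟩ fun s hs => ?_
  rw [Nat.one_le_iff_ne_zero, Ne, card_eq_zero, filter_eq_empty_iff]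
  intro hfalse
  have : Disjoint (atomOf C s) (univ.sup C) := Finset.disjoint_sup_right.2 fun i _ =>
    le_compl_iff_disjoint_right.1 (atomOf_le_compl C (by simpa using hfalse (mem_univ i)))
  exact hs (disjoint_top.1 (hC ▸ this))

theorem IsAddMeasure.covMult_mul_le_sum {φ : α → ℝ} (h : IsAddMeasure φ) :
    covMult C * φ ⊤ ≤ ∑ i, φ (C i) := by
  have hCi : ∀ i, φ (C i) = ∑ s, if s i then φ (atomOf C s) else 0 := fun i => by
    rw [h.eq_sum_inf_atomOf C]
    exact sum_congr rfl fun s _ => by rw [inf_atomOf]; split_ifs <;> simp [h.1]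
  rw [h.eq_sum_inf_atomOf C ⊤, mul_sum]
  simp_rw [hCi, top_inf_eq]
  rw [sum_comm]
  refine sum_le_sum fun s _ => ?_
  rw [← sum_filter, sum_const, nsmul_eq_mul]
  by_cases hs : atomOf C s = ⊥
  · simp [hs, h.1]
  · exact mul_le_mul_of_nonneg_right (by exact_mod_cast covMult_le_card C hs) (h.2.1 _)

end CovMult

section CovNumber

variable {α : Type*} [BooleanAlgebra α]

theorem bddAbove_covNumber_set (ℬ : Set α) :
    BddAbove {r : ℝ | ∃ n : ℕ, 0 < n ∧ ∃ C : Fin n → α, (∀ i, C i ∈ ℬ) ∧ r = covMult C / n} := by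
  refine ⟨1, ?_⟩
  rintro _ ⟨n, hn, C, -, rfl⟩
  exact div_le_one_of_le₀ (by exact_mod_cast covMult_le C) (Nat.cast_nonneg n)

theorem le_covNumber {ℬ : Set α} {n : ℕ} (hn : 0 < n) {C : Fin n → α} (hC : ∀ i, C i ∈ ℬ) :
    covMult C / n ≤ covNumber ℬ :=
  le_csSup (bddAbove_covNumber_set ℬ) ⟨n, hn, C, hC, rfl⟩

variable {φ : α → ℝ}

theorem IsAddMeasure.covNumber_le (h : IsAddMeasure φ) (hpos : 0 < φ ⊤) {ξ : ℝ} (hξ : 0 ≤ ξ) :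
    covNumber {A | φ A ≤ ξ} ≤ ξ / φ ⊤ := by
  refine Real.sSup_le ?_ (div_nonneg hξ hpos.le)
  rintro _ ⟨n, hn, C, hC, rfl⟩
  rw [div_le_div_iff₀ (by exact_mod_cast hn) hpos]
  calc covMult C * φ ⊤ ≤ ∑ i, φ (C i) := h.covMult_mul_le_sum C
    _ ≤ ∑ _i : Fin n, ξ := sum_le_sum fun i _ => hC i
    _ = ξ * n := by simp [mul_comm]

end CovNumber

section Packing

variable {α : Type*} [BooleanAlgebra α]

theorem Fin.sup_univ_cons {k : ℕ} (a : α) (T : Fin k → α) :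
    univ.sup (Fin.cons a T : Fin (k + 1) → α) = a ⊔ univ.sup T := by
  rw [Fin.univ_succ, sup_cons, sup_map]
  rfl

variable {φ : α → ℝ} {ε ξ : ℝ}

/-- A greedy packing of `x` by pieces of measure `≤ ε` into bins of measure `≤ ξ`: `a` is the bin
being filled and the `T i` are the closed bins, each closed when a piece no longer fit into it. -/
structure IsPacking (φ : α → ℝ) (ε ξ : ℝ) (x a : α) {k : ℕ} (T : Fin k → α) : Prop where
  disjoint : Disjoint a (univ.sup T)
  sup_eq : a ⊔ univ.sup T = x
  le_open : φ a ≤ ξ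
  le_closed : ∀ i, φ (T i) ≤ ξ
  card_mul_le : k * (ξ - ε) ≤ φ (univ.sup T)

theorem IsPacking.exists_sup_left {x a : α} {k : ℕ} {T : Fin k → α} (hP : IsPacking φ ε ξ x a T)
    (h : IsAddMeasure φ) (hεξ : ε ≤ ξ) {p : α} (hp : φ p ≤ ε) (hpx : Disjoint p x) :
    ∃ (k' : ℕ) (a' : α) (T' : Fin k' → α), IsPacking φ ε ξ (p ⊔ x) a' T' := by
  rw [← hP.sup_eq] at hpx ⊢
  have hpa : Disjoint p a := hpx.mono_right le_sup_left
  by_cases hfit : φ (p ⊔ a) ≤ ξ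
  · refine ⟨k, p ⊔ a, T, disjoint_sup_left.2 ⟨hpx.mono_right le_sup_right, hP.disjoint⟩,
      sup_assoc .., hfit, hP.le_closed, hP.card_mul_le⟩
  · have ha : ξ - ε < φ a := by rw [h.2.2 _ _ hpa] at hfit; linarith
    refine ⟨k + 1, p, Fin.cons a T, ?_, ?_, hp.trans hεξ, Fin.cases hP.le_open hP.le_closed, ?_⟩
    all_goals rw [Fin.sup_univ_cons]
    · exact hpx
    · rw [h.2.2 _ _ hP.disjoint]
      push_cast
      linarith [hP.card_mul_le]

theorem IsAddMeasure.exists_isPacking (h : IsAddMeasure φ) (hεξ : ε ≤ ξ) (hξ : 0 ≤ ξ)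
    (ℬ : Finset α) (hℬ : ∀ b ∈ ℬ, φ b ≤ ε) :
    ∃ (k : ℕ) (a : α) (T : Fin k → α), IsPacking φ ε ξ (ℬ.sup id) a T := by
  classical
  induction ℬ using Finset.induction with
  | empty => exact ⟨0, ⊥, Fin.elim0, by simp, by simp, by simp [h.1, hξ], Fin.rec0, by simp [h.1]⟩
  | insert b ℬ hb ih =>
    obtain ⟨k, a, T, hP⟩ := ih fun c hc => hℬ c (mem_insert_of_mem hc)
    have hbε : φ (b \ ℬ.sup id) ≤ ε := (h.monotone sdiff_le).trans (hℬ b (mem_insert_self b ℬ))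
    rw [sup_insert, id, ← sup_sdiff_self_left]
    exact hP.exists_sup_left h hεξ hbε disjoint_sdiff_self_left

end Packing

section Hphi

variable {α : Type*} [BooleanAlgebra α] {φ : α → ℝ}

theorem IsAddMeasure.exists_cover (h : IsAddMeasure φ) (hd : IsDiffuse φ) {ε ξ : ℝ}
    (hε : 0 < ε) (hεξ : ε ≤ ξ) :
    ∃ (k : ℕ) (C : Fin (k + 1) → α),
      univ.sup C = ⊤ ∧ (∀ i, φ (C i) ≤ ξ) ∧ k * (ξ - ε) ≤ φ ⊤ := by
  obtain ⟨ℬ, hℬ, hsmall⟩ := hd ε hε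
  obtain ⟨k, a, T, hP⟩ := h.exists_isPacking hεξ (hε.le.trans hεξ) ℬ hsmall
  exact ⟨k, Fin.cons a T, by rw [Fin.sup_univ_cons, hP.sup_eq, hℬ],
    Fin.cases hP.le_open hP.le_closed, hP.card_mul_le.trans (h.monotone le_top)⟩

theorem IsAddMeasure.hphi_le (h : IsAddMeasure φ) (hpos : 0 < φ ⊤) {ξ : ℝ} (hξ : 0 < ξ) :
    hphi φ ξ ≤ 1 / φ ⊤ :=
  calc hphi φ ξ ≤ ξ / φ ⊤ / ξ := div_le_div_of_nonneg_right (h.covNumber_le hpos hξ.le) hξ.le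
    _ = 1 / φ ⊤ := by field_simp

theorem IsAddMeasure.le_hphi (h : IsAddMeasure φ) (hd : IsDiffuse φ) (hpos : 0 < φ ⊤) {ξ : ℝ}
    (hξ : ξ ∈ Set.Ioo 0 1) : (1 - ξ) / (φ ⊤ + ξ - ξ ^ 2) ≤ hphi φ ξ := by
  obtain ⟨hξ0, hξ1⟩ := hξ
  have htop : (⊤ : α) ≠ ⊥ := fun e => by simp [e, h.1] at hpos
  obtain ⟨k, C, hC, hCξ, hk⟩ := h.exists_cover hd (ε := ξ ^ 2) (ξ := ξ) (by positivity)
    (by nlinarith)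
  have hcov : 1 / (k + 1 : ℝ) ≤ covNumber {A | φ A ≤ ξ} :=
    calc 1 / (k + 1 : ℝ) ≤ covMult C / (k + 1 : ℕ) := by
          push_cast
          gcongr
          exact_mod_cast one_le_covMult C htop hC
      _ ≤ _ := le_covNumber k.succ_pos hCξ
  calc (1 - ξ) / (φ ⊤ + ξ - ξ ^ 2) ≤ 1 / (k + 1) / ξ := by
        rw [div_div, div_le_div_iff₀ (by nlinarith) (by positivity)]
        nlinarith
    _ ≤ hphi φ ξ := div_le_div_of_nonneg_right hcov hξ0.le

end Hphi

/-- For a nonzero diffuse measure `φ`, `h_φ(ξ) → 1/φ(1)` as `ξ → 0⁺`. -/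
theorem measure_hphi_tendsto {α : Type*} [BooleanAlgebra α] (φ : α → ℝ)
    (hmeas : IsAddMeasure φ) (hd : IsDiffuse φ) (hpos : 0 < φ ⊤) :
    Filter.Tendsto (fun ξ => hphi φ ξ) (nhdsWithin 0 (Set.Ioi 0)) (nhds (1 / φ ⊤)) := by
  have hupper : ∀ᶠ ξ in 𝓝[>] 0, hphi φ ξ ≤ 1 / φ ⊤ :=
    eventually_mem_nhdsWithin.mono fun ξ hξ => hmeas.hphi_le hpos hξ
  have hlower : ∀ᶠ ξ in 𝓝[>] 0, (1 - ξ) / (φ ⊤ + ξ - ξ ^ 2) ≤ hphi φ ξ :=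
    mem_of_superset (Ioo_mem_nhdsGT one_pos) fun ξ hξ => hmeas.le_hphi hd hpos hξ
  have hlim : Tendsto (fun ξ : ℝ => (1 - ξ) / (φ ⊤ + ξ - ξ ^ 2)) (𝓝[>] 0) (𝓝 (1 / φ ⊤)) := by
    have : ContinuousAt (fun ξ : ℝ => (1 - ξ) / (φ ⊤ + ξ - ξ ^ 2)) 0 :=
      ContinuousAt.div (by fun_prop) (by fun_prop) (by simpa using hpos.ne')
    simpa using this.tendsto.mono_left nhdsWithin_le_nhds
  exact tendsto_of_tendsto_of_tendsto_of_le_of_le' hlim tendsto_const_nhds hlower hupper
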